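/- Let C be cyclic of order 2^n, n ≥ 3, with involution ⊛ induced by a ↦ a^{2^{n-1}-1}. The element 1 + Ĉ² (the sum 1 plus the sum of all elements of C²) is not a square of any ⊛-unitary normalized unit, i.e., there is no x ∈ V(F_2 C) with x^⊛ = x^{-1} and x² = 1 + Ĉ². -/

import Mathlib

/-!
In the commutative algebra `F₂C` of characteristic 2 squaring is additive, so
`x² = ∑ x_g g²`. Summing the coefficients of `x² = 1 + Ĉ²` over the fourth powers `C⁴`, and
using that `g² ∈ C⁴` iff `g ∈ C²` (as `n ≥ 2`), shows that the coefficients of `x` over `C²` sum to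
`1 + |C⁴| = 1`: for `n ≥ 3` the subgroup `C⁴` contains `a^(2^(n-1))`, of order 2.
On the other hand `x^⊛ = x⁻¹` turns `x² = 1 + Ĉ²` into `x + x^⊛ = x^⊛ Ĉ²`. The coefficient of `1`
on the left is `x_1 + x_1 = 0`, while on the right it is the sum of the coefficients of `x` over
the image of `C²` under `g ↦ θ(g⁻¹)`, which is `C²` again; so it equals `1`.
-/

open MonoidAlgebra Finset

noncomputable section

/-- The cyclic group of order `2^n`, written multiplicatively. -/
abbrev Cgrp (n : ℕ) : Type := Multiplicative (ZMod (2 ^ n))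

/-- The group algebra `F₂C` of the cyclic group of order `2^n` over the field of two elements. -/
abbrev FC (n : ℕ) : Type := MonoidAlgebra (ZMod 2) (Cgrp n)

/-- The augmentation map `χ : F₂C → F₂`. -/
def aug (n : ℕ) : FC n →ₐ[ZMod 2] ZMod 2 :=
  MonoidAlgebra.lift (ZMod 2) (ZMod 2) (Cgrp n) 1

/-- The generator `a` of the cyclic group `C`. -/
def agen (n : ℕ) : Cgrp n := Multiplicative.ofAdd (1 : ZMod (2 ^ n))

/-- The generator `a` viewed inside the group algebra `F₂C`. -/
def A (n : ℕ) : FC n := MonoidAlgebra.of (ZMod 2) (Cgrp n) (agen n)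

/-- Group elements of `C` as elements of the group algebra. -/
def Gel (n : ℕ) (i : ZMod (2 ^ n)) : FC n :=
  MonoidAlgebra.of (ZMod 2) (Cgrp n) (Multiplicative.ofAdd i)

/-- The involution `*` of `F₂C` induced by `a ↦ a⁻¹`. -/
def starOne (n : ℕ) : FC n ≃ₐ[ZMod 2] FC n :=
  MonoidAlgebra.domCongr (ZMod 2) (ZMod 2) (MulEquiv.inv (Cgrp n))

/-- The scalar `2^(n-1) - 1` in `ZMod (2^n)`. -/
def cf (n : ℕ) : ZMod (2 ^ n) := 2 ^ (n - 1) - 1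

lemma two_pow_zmod (n : ℕ) : ((2 : ZMod (2 ^ n))) ^ n = 0 := by
  have h : ((2 ^ n : ℕ) : ZMod (2 ^ n)) = 0 := ZMod.natCast_self _
  push_cast at h
  exact h

lemma cf_sq (n : ℕ) (hn : 2 ≤ n) : cf n * cf n = 1 := by
  have h0 := two_pow_zmod n
  have e1 : (2 : ZMod (2 ^ n)) ^ (n - 1) * 2 ^ (n - 1) = 0 := by
    rw [← pow_add]
    have h : n - 1 + (n - 1) = n + (n - 2) := by omega
    rw [h, pow_add, h0, zero_mul]
  have e2 : (2 : ZMod (2 ^ n)) * 2 ^ (n - 1) = 0 := by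
    have h : (2 : ZMod (2 ^ n)) * 2 ^ (n - 1) = 2 ^ (n - 1 + 1) := (pow_succ' 2 (n-1)).symm
    rw [h]
    have h' : n - 1 + 1 = n := by omega
    rw [h', h0]
  have key : cf n * cf n = 2 ^ (n - 1) * 2 ^ (n - 1) - 2 * 2 ^ (n - 1) + 1 := by
    unfold cf; ring
  rw [key, e1, e2]; ring

/-- The automorphism `z ↦ (2^(n-1)-1)·z` of `ZMod (2^n)`. -/
def thetaAdd (n : ℕ) (hn : 2 ≤ n) : ZMod (2 ^ n) ≃+ ZMod (2 ^ n) where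
  toFun z := cf n * z
  invFun z := cf n * z
  left_inv z := by show cf n * (cf n * z) = z; rw [← mul_assoc, cf_sq n hn, one_mul]
  right_inv z := by show cf n * (cf n * z) = z; rw [← mul_assoc, cf_sq n hn, one_mul]
  map_add' x y := mul_add _ _ _

/-- The automorphism `a ↦ a^(2^(n-1)-1)` of `C`. -/
def theta (n : ℕ) (hn : 2 ≤ n) : Cgrp n ≃* Cgrp n :=
  AddEquiv.toMultiplicative (thetaAdd n hn)

/-- The involution `⊛` of `F₂C` induced by `a ↦ a^(2^(n-1)-1)`. -/
def starTwo (n : ℕ) (hn : 2 ≤ n) : FC n ≃ₐ[ZMod 2] FC n :=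
  MonoidAlgebra.domCongr (ZMod 2) (ZMod 2) (theta n hn)

/-- The group `V(F₂C)` of normalized units, as a subgroup of the unit group of `F₂C`. -/
def Vgrp (n : ℕ) : Subgroup (FC n)ˣ where
  carrier := {u | aug n (↑u : FC n) = 1}
  one_mem' := by simp [Set.mem_setOf_eq]
  mul_mem' := by
    intro u v hu hv
    simp only [Set.mem_setOf_eq, Units.val_mul, map_mul] at *
    rw [hu, hv, one_mul]
  inv_mem' := by
    intro u hu
    simp only [Set.mem_setOf_eq] at *
    have h : aug n ((↑u : FC n) * (↑u⁻¹ : FC n)) = 1 := by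
      rw [Units.mul_inv, map_one]
    rw [map_mul, hu, one_mul] at h
    exact h

/-- The sum `Ĉ` of all elements of `C` inside the group algebra. -/
def hatC (n : ℕ) : FC n := ∑ g : Cgrp n, MonoidAlgebra.of (ZMod 2) (Cgrp n) g

/-- The sum `Ĉ²` of all elements of the subgroup `C²` of squares. -/
def hatCsq (n : ℕ) : FC n :=
  ∑ g ∈ Finset.image (fun h : Cgrp n => h * h) Finset.univ,
    MonoidAlgebra.of (ZMod 2) (Cgrp n) g

/-- The subspace `F₂C²` of `F₂C` spanned by the subgroup of squares. -/
def sqSpan (n : ℕ) : Submodule (ZMod 2) (FC n) :=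
  Submodule.span (ZMod 2) (Set.range fun g : Cgrp n => MonoidAlgebra.of (ZMod 2) (Cgrp n) (g * g))

lemma hatC_mul_hatC (n : ℕ) (hn : 1 ≤ n) : hatC n * hatC n = 0 := by
  classical
  unfold hatC
  rw [Finset.sum_mul_sum]
  have h1 : ∀ g : Cgrp n,
      ∑ h : Cgrp n, MonoidAlgebra.of (ZMod 2) (Cgrp n) g * MonoidAlgebra.of (ZMod 2) (Cgrp n) h
        = hatC n := by
    intro g
    have h2 : ∀ h : Cgrp n,
        MonoidAlgebra.of (ZMod 2) (Cgrp n) g * MonoidAlgebra.of (ZMod 2) (Cgrp n) h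
          = MonoidAlgebra.of (ZMod 2) (Cgrp n) (g * h) := by
      intro h; rw [map_mul]
    unfold hatC
    calc ∑ h : Cgrp n, MonoidAlgebra.of (ZMod 2) (Cgrp n) g * MonoidAlgebra.of (ZMod 2) (Cgrp n) h
        = ∑ h : Cgrp n, MonoidAlgebra.of (ZMod 2) (Cgrp n) (g * h) := by
          exact Finset.sum_congr rfl fun h _ => h2 h
      _ = ∑ h : Cgrp n, MonoidAlgebra.of (ZMod 2) (Cgrp n) h :=
          Fintype.sum_equiv (Equiv.mulLeft g) _ _ (fun h => rfl)
  calc (∑ g : Cgrp n, ∑ h : Cgrp n,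
        MonoidAlgebra.of (ZMod 2) (Cgrp n) g * MonoidAlgebra.of (ZMod 2) (Cgrp n) h)
      = ∑ _g : Cgrp n, hatC n := Finset.sum_congr rfl fun g _ => h1 g
    _ = (Fintype.card (Cgrp n)) • hatC n := by rw [Finset.sum_const, Finset.card_univ]
    _ = 0 := by
        rw [← Nat.cast_smul_eq_nsmul (ZMod 2)]
        have hc : ((Fintype.card (Cgrp n) : ℕ) : ZMod 2) = 0 := by
          have : Fintype.card (Cgrp n) = 2 ^ n := by simp [Cgrp, ZMod.card]
          rw [this]
          push_cast
          rw [show ((2:ZMod 2) = 0) from rfl, zero_pow (by omega)]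
        rw [hc, zero_smul]

lemma add_self_FC (n : ℕ) (x : FC n) : x + x = 0 := by
  rw [← two_smul (ZMod 2) x, show ((2:ZMod 2) = 0) from rfl, zero_smul]

/-- `1 + Ĉ` as a unit of `F₂C` (it is its own inverse). -/
def uC (n : ℕ) (hn : 1 ≤ n) : (FC n)ˣ :=
  ⟨1 + hatC n, 1 + hatC n, by
    have h : (1 + hatC n) * (1 + hatC n) = 1 + (hatC n + hatC n) + hatC n * hatC n := by ring
    rw [h, add_self_FC, hatC_mul_hatC n hn, add_zero, add_zero], by
    have h : (1 + hatC n) * (1 + hatC n) = 1 + (hatC n + hatC n) + hatC n * hatC n := by ring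
    rw [h, add_self_FC, hatC_mul_hatC n hn, add_zero, add_zero]⟩

instance MonoidAlgebra.instCharP {R G : Type*} [CommRing R] [Monoid G] (p : ℕ) [CharP R p] :
    CharP (MonoidAlgebra R G) p :=
  charP_of_injective_algebraMap' R p

lemma add_eq_mul_of_mul_eq_one_of_mul_self_eq {R : Type*} [CommRing R] [CharP R 2] {u s c : R}
    (hus : u * s = 1) (huu : u * u = 1 + c) : u + s = s * c := by
  have hc : c = u * u - 1 := by rw [huu]; ring
  rw [← CharTwo.sub_eq_add, hc]
  linear_combination (-u) * hus

section Powers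

variable (G : Type*) [CommMonoid G] [Fintype G] [DecidableEq G]

def squares : Finset G := Finset.image (fun g => g * g) univ

def fourthPowers : Finset G := Finset.image (fun g => g ^ 4) univ

variable {G}

lemma mem_squares {g : G} : g ∈ squares G ↔ ∃ h, h * h = g := by simp [squares]

lemma mem_fourthPowers {g : G} : g ∈ fourthPowers G ↔ ∃ h, h ^ 4 = g := by simp [fourthPowers]

lemma one_mem_fourthPowers : (1 : G) ∈ fourthPowers G := mem_fourthPowers.2 ⟨1, one_pow 4⟩

lemma fourthPowers_subset_squares : fourthPowers G ⊆ squares G := by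
  intro g hg
  obtain ⟨h, rfl⟩ := mem_fourthPowers.1 hg
  exact mem_squares.2 ⟨h ^ 2, by rw [← pow_add]⟩

lemma map_mem_squares_iff (φ : G ≃* G) {g : G} : φ g ∈ squares G ↔ g ∈ squares G := by
  simp only [mem_squares]
  constructor
  · rintro ⟨h, hh⟩
    exact ⟨φ.symm h, by rw [← map_mul, hh, MulEquiv.symm_apply_apply]⟩
  · rintro ⟨h, rfl⟩
    exact ⟨φ h, (map_mul φ h h).symm⟩

lemma sum_squares_comp_mulEquiv {M : Type*} [AddCommMonoid M] (φ : G ≃* G) (f : G → M) :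
    ∑ g ∈ squares G, f (φ g) = ∑ g ∈ squares G, f g :=
  Finset.sum_equiv φ.toEquiv (fun _ => (map_mem_squares_iff φ).symm) fun _ _ => rfl

end Powers

lemma card_fourthPowers {G : Type*} [CommGroup G] [Fintype G] [DecidableEq G] :
    (fourthPowers G).card = Nat.card (powMonoidHom 4 : G →* G).range := by
  rw [← Nat.card_eq_finsetCard]
  exact Nat.card_congr (Equiv.subtypeEquivRight fun g => by simp [mem_fourthPowers])

namespace MonoidAlgebra

lemma coeff_sum_of {R G : Type*} [Semiring R] [Monoid G] [DecidableEq G] (S : Finset G) (g : G) :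
    (∑ k ∈ S, of R G k).coeff g = if g ∈ S then 1 else 0 := by
  simp [Finsupp.single_apply]

lemma coeff_one_mul_sum_of {R G : Type*} [Semiring R] [Group G] (y : MonoidAlgebra R G)
    (S : Finset G) : (y * ∑ k ∈ S, of R G k).coeff 1 = ∑ k ∈ S, y.coeff k⁻¹ := by
  simp [Finset.mul_sum]

lemma coeff_one_domCongr_mul_sum_squares {R G : Type*} [CommSemiring R] [CommGroup G] [Fintype G]
    [DecidableEq G] (φ : G ≃* G) (u : MonoidAlgebra R G) :
    (domCongr R R φ u * ∑ k ∈ squares G, of R G k).coeff 1 = ∑ k ∈ squares G, u.coeff k := by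
  rw [coeff_one_mul_sum_of]
  simpa using sum_squares_comp_mulEquiv ((MulEquiv.inv G).trans φ.symm) u.coeff

section Frobenius

variable {G : Type*} [CommMonoid G] [Fintype G]

lemma mul_self_eq_sum_single (x : MonoidAlgebra (ZMod 2) G) :
    x * x = ∑ g, single (g * g) (x.coeff g) := by
  conv_lhs => rw [← x.sum_coeff_single, Finsupp.sum_fintype _ _ (fun _ => single_zero _)]
  rw [CharTwo.sum_mul_self]
  refine Finset.sum_congr rfl fun g _ => ?_
  rw [single_mul_single, ← sq (x.coeff g), ZMod.pow_card]

lemma sum_coeff_mul_self [DecidableEq G] (x : MonoidAlgebra (ZMod 2) G) (T : Finset G) :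
    ∑ h ∈ T, (x * x).coeff h = ∑ g with g * g ∈ T, x.coeff g := by
  simp_rw [mul_self_eq_sum_single, coeff_sum, Finsupp.finsetSum_apply, coeff_single]
  rw [Finset.sum_comm, Finset.sum_filter]
  simp [Finsupp.single_apply]

end Frobenius

end MonoidAlgebra

lemma ZMod.exists_eq_two_mul_of_two_mul_eq_four_mul {n : ℕ} (hn : 2 ≤ n) {a b : ZMod (2 ^ n)}
    (h : 2 * a = 4 * b) : ∃ c, a = 2 * c := by
  obtain ⟨a, rfl⟩ := ZMod.intCast_surjective a
  obtain ⟨b, rfl⟩ := ZMod.intCast_surjective b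
  have hdvd : ((2 * (2 * 2 ^ (n - 2)) : ℕ) : ℤ) ∣ 2 * (a - 2 * b) := by
    rw [← pow_succ', ← pow_succ', show n - 2 + 1 + 1 = n by omega,
      ← ZMod.intCast_zmod_eq_zero_iff_dvd]
    push_cast
    linear_combination h
  push_cast at hdvd
  obtain ⟨k, hk⟩ := (dvd_mul_right 2 _).trans (Int.dvd_of_mul_dvd_mul_left two_ne_zero hdvd)
  refine ⟨((k + b : ℤ) : ZMod (2 ^ n)), ?_⟩
  have hk' := congrArg (Int.cast : ℤ → ZMod (2 ^ n)) hk
  push_cast at hk' ⊢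
  linear_combination hk'

namespace Cgrp

lemma mul_self_mem_fourthPowers_iff {n : ℕ} (hn : 2 ≤ n) {g : Cgrp n} :
    g * g ∈ fourthPowers (Cgrp n) ↔ g ∈ squares (Cgrp n) := by
  rw [mem_fourthPowers, mem_squares]
  constructor
  · rintro ⟨h, hh⟩
    have hadd : 2 * g.toAdd = 4 * h.toAdd := by
      have := congrArg Multiplicative.toAdd hh
      rw [toAdd_pow, toAdd_mul, nsmul_eq_mul] at this
      push_cast at this
      linear_combination -this
    obtain ⟨c, hc⟩ := ZMod.exists_eq_two_mul_of_two_mul_eq_four_mul hn hadd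
    exact ⟨.ofAdd c, Multiplicative.toAdd.injective (by rw [toAdd_mul, toAdd_ofAdd, hc]; ring)⟩
  · rintro ⟨h, rfl⟩
    exact ⟨h, by rw [← pow_two h, ← pow_add]⟩

lemma even_card_fourthPowers {n : ℕ} (hn : 3 ≤ n) : Even (fourthPowers (Cgrp n)).card := by
  set τ : Cgrp n := .ofAdd ((2 ^ (n - 1) : ℕ) : ZMod (2 ^ n))
  have hτ : τ ∈ (powMonoidHom 4 : Cgrp n →* Cgrp n).range := by
    refine ⟨.ofAdd ((2 ^ (n - 3) : ℕ) : ZMod (2 ^ n)), Multiplicative.toAdd.injective ?_⟩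
    rw [powMonoidHom_apply, toAdd_pow, toAdd_ofAdd, toAdd_ofAdd, nsmul_eq_mul]
    rw [show n - 1 = 2 + (n - 3) by omega]
    push_cast
    ring
  have hord : orderOf τ = 2 := by
    rw [orderOf_ofAdd_eq_addOrderOf, ZMod.addOrderOf_coe _ (by positivity),
      Nat.gcd_eq_right (Nat.pow_dvd_pow 2 (Nat.sub_le n 1)), Nat.pow_div (Nat.sub_le n 1) two_pos,
      show n - (n - 1) = 1 by omega, pow_one]
  have hdvd := orderOf_dvd_natCard (⟨τ, hτ⟩ : (powMonoidHom 4 : Cgrp n →* Cgrp n).range)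
  rw [Subgroup.orderOf_mk, hord] at hdvd
  rw [card_fourthPowers, even_iff_two_dvd]
  exact hdvd

end Cgrp

lemma hatCsq_eq_sum_squares (n : ℕ) :
    hatCsq n = ∑ g ∈ squares (Cgrp n), of (ZMod 2) (Cgrp n) g := rfl

lemma sum_coeff_squares_eq_one {n : ℕ} (hn : 3 ≤ n) {u : FC n} (hu : u * u = 1 + hatCsq n) :
    ∑ g ∈ squares (Cgrp n), u.coeff g = 1 := by
  have hsq : ({g | g * g ∈ fourthPowers (Cgrp n)} : Finset (Cgrp n)) = squares (Cgrp n) := by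
    ext g
    simp [Cgrp.mul_self_mem_fourthPowers_iff (n := n) (by omega)]
  have hone : ∑ h ∈ fourthPowers (Cgrp n), (1 : FC n).coeff h = 1 := by
    simp [one_def, Finsupp.single_apply, one_mem_fourthPowers]
  have hhat : ∑ h ∈ fourthPowers (Cgrp n), (hatCsq n).coeff h = (fourthPowers (Cgrp n)).card := by
    simp_rw [hatCsq_eq_sum_squares, coeff_sum_of, Finset.sum_boole,
      Finset.filter_true_of_mem fun _ h => fourthPowers_subset_squares h]
  calc ∑ g ∈ squares (Cgrp n), u.coeff g
      = ∑ h ∈ fourthPowers (Cgrp n), (u * u).coeff h := by rw [sum_coeff_mul_self, hsq]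
    _ = 1 + (fourthPowers (Cgrp n)).card := by
      simp only [hu, coeff_add, Finsupp.add_apply, Finset.sum_add_distrib, hone, hhat]
    _ = 1 := by rw [(Cgrp.even_card_fourthPowers hn).natCast_zmod_two, add_zero]

/-- For `C` cyclic of order `2^n`, `n ≥ 3`, the element `1 + Ĉ²` is not the square of any
`⊛`-unitary normalized unit: there is no `x ∈ V(F₂C)` with `x^⊛ = x⁻¹` and `x² = 1 + Ĉ²`. -/
theorem stmt9 (n : ℕ) (hn : 3 ≤ n) :
    ¬ ∃ x : (FC n)ˣ, aug n (↑x : FC n) = 1 ∧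
        starTwo n (by omega) (↑x : FC n) = (↑x⁻¹ : FC n) ∧
        (↑x : FC n) ^ 2 = 1 + hatCsq n := by
  rintro ⟨x, -, hstar, hsq⟩
  set u : FC n := ↑x
  set s : FC n := starTwo n (by omega) u
  have hus : u * s = 1 := by rw [hstar]; exact x.mul_inv
  have huu : u * u = 1 + hatCsq n := by rw [← sq, hsq]
  have key : u + s = s * hatCsq n := add_eq_mul_of_mul_eq_one_of_mul_self_eq hus huu
  have hleft : (u + s).coeff 1 = 0 := by simp [s, starTwo, CharTwo.add_self_eq_zero]
  have hright : (s * hatCsq n).coeff 1 = 1 :=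
    (coeff_one_domCongr_mul_sum_squares _ u).trans (sum_coeff_squares_eq_one hn huu)
  rw [← key, hleft] at hright
  exact zero_ne_one hright
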